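/- Given sets X = {x_1,...,x_n} and Y = {y_1,...,y_n} of non-negative reals, let K = 2·max(X∪Y)+3 and build a tree T with vertices u, v of weight 0 joined by an edge of length K/2; for each x_i a vertex of weight x_i+1 attached to u by an edge of length K/2 − x_i − 1; for each y_j a vertex of weight K − y_j − 1 attached to v by an edge of length y_j + 1. Then X ∩ Y ≠ ∅ if and only if there exists a set P of vertices of T with total weight at least K and pairwise distances at least K. -/

import Mathlib

/-- Vertices of the tree in the set-disjointness reduction. -/
inductive RV (n : ℕ) where
  | u : RV n
  | v : RV n
  | X (i : Fin n) : RV n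
  | Y (j : Fin n) : RV n
deriving DecidableEq, Fintype

/-- Tree distances in the reduction tree: `X i — u — v — Y j`, with
`d(u, X i) = K/2 - xs i - 1`, `d(u,v) = K/2`, `d(v, Y j) = ys j + 1`. -/
noncomputable def rvDist {n : ℕ} (xs ys : Fin n → ℝ) (K : ℝ) : RV n → RV n → ℝ :=
  fun a b =>
    if a = b then 0
    else
      match a, b with
      | RV.v, RV.Y j => ys j + 1
      | RV.Y j, RV.v => ys j + 1
      | RV.Y i, RV.Y j => (ys i + 1) + (ys j + 1)
      | a, b => du a + du b
  where du : RV n → ℝ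
    | RV.u => 0
    | RV.v => K / 2
    | RV.X i => K / 2 - xs i - 1
    | RV.Y j => K / 2 + ys j + 1

/-- Vertex weights in the reduction tree. -/
noncomputable def rvWeight {n : ℕ} (xs ys : Fin n → ℝ) (K : ℝ) : RV n → ℝ
  | RV.u => 0
  | RV.v => 0
  | RV.X i => xs i + 1
  | RV.Y j => K - ys j - 1

/-!
The only pairs of vertices at distance at least `K` are `X i`, `Y j` with `xs i ≤ ys j`, at
distance `K + ys j - xs i`, and every single vertex weighs less than `K`. Hence a feasible set
contains such a pair and nothing else, and its weight `K + xs i - ys j` is at least `K` only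
if also `ys j ≤ xs i`. Conversely `{X i, Y j}` is feasible whenever `xs i = ys j`.
-/

section

variable {n : ℕ} {xs ys : Fin n → ℝ} {K : ℝ}

def Feasible (xs ys : Fin n → ℝ) (K : ℝ) (P : Finset (RV n)) : Prop :=
  K ≤ ∑ a ∈ P, rvWeight xs ys K a ∧ ∀ a ∈ P, ∀ b ∈ P, a ≠ b → K ≤ rvDist xs ys K a b

lemma rvDist_X_Y (i j : Fin n) : rvDist xs ys K (.X i) (.Y j) = K + ys j - xs i := by
  simp only [rvDist, reduceCtorEq, ↓reduceIte, rvDist.du]; ring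

lemma rvDist_Y_X (i j : Fin n) : rvDist xs ys K (.Y j) (.X i) = K + ys j - xs i := by
  simp only [rvDist, reduceCtorEq, ↓reduceIte, rvDist.du]; ring

lemma sum_rvWeight_X_Y (i j : Fin n) :
    ∑ a ∈ {.X i, .Y j}, rvWeight xs ys K a = K + xs i - ys j := by
  rw [Finset.sum_pair (by simp)]; simp only [rvWeight]; ring

lemma rvWeight_nonneg (hxs : ∀ i, 0 ≤ xs i) (hys : ∀ j, 0 ≤ ys j)
    (hyK : ∀ j, 2 * ys j + 2 < K) (a : RV n) : 0 ≤ rvWeight xs ys K a := by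
  rcases a with _ | _ | i | j <;> simp only [rvWeight, le_refl]
  · linarith [hxs i]
  · linarith [hys j, hyK j]

lemma rvWeight_lt (hK : 0 < K) (hys : ∀ j, 0 ≤ ys j)
    (hxK : ∀ i, 2 * xs i + 2 < K) (a : RV n) : rvWeight xs ys K a < K := by
  rcases a with _ | _ | i | j <;> simp only [rvWeight, hK]
  · linarith [hxK i]
  · linarith [hys j]

lemma sum_rvWeight_lt_of_card_le_one (hK : 0 < K) (hys : ∀ j, 0 ≤ ys j)
    (hxK : ∀ i, 2 * xs i + 2 < K) {P : Finset (RV n)} (hP : P.card ≤ 1) :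
    ∑ a ∈ P, rvWeight xs ys K a < K := by
  rcases P.eq_empty_or_nonempty with rfl | hne
  · simpa using hK
  · obtain ⟨a, rfl⟩ := Finset.card_eq_one.1 (hP.antisymm hne.card_pos)
    simpa using rvWeight_lt hK hys hxK a

lemma exists_X_Y_of_le_rvDist (hK : 0 < K) (hxs : ∀ i, 0 ≤ xs i)
    (hyK : ∀ j, 2 * ys j + 2 < K) {a b : RV n} (hab : a ≠ b) (h : K ≤ rvDist xs ys K a b) :
    ∃ i j, (a = .X i ∧ b = .Y j ∨ a = .Y j ∧ b = .X i) ∧ xs i ≤ ys j := by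
  rcases a with _ | _ | i | j <;> rcases b with _ | _ | i' | j' <;>
    simp only [ne_eq, RV.X.injEq, RV.Y.injEq, reduceCtorEq, not_false_eq_true,
      not_true_eq_false] at hab <;>
    simp [rvDist, rvDist.du, hab] at h ⊢
  all_goals first
    | linarith
    | linarith [hxs i]
    | linarith [hxs i']
    | linarith [hxs i, hxs i']
    | linarith [hyK j]
    | linarith [hyK j']
    | linarith [hyK j, hyK j']

lemma feasible_X_Y {i j : Fin n} (h : xs i = ys j) : Feasible xs ys K {.X i, .Y j} := by
  refine ⟨by rw [sum_rvWeight_X_Y, h]; simp, ?_⟩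
  simp only [Finset.mem_insert, Finset.mem_singleton]
  rintro a (rfl | rfl) b (rfl | rfl) hab
  all_goals first
    | exact absurd rfl hab
    | simp only [rvDist_X_Y, rvDist_Y_X, h, add_sub_cancel_right, le_refl]

lemma exists_eq_of_feasible (hK : 0 < K) (hxs : ∀ i, 0 ≤ xs i) (hys : ∀ j, 0 ≤ ys j)
    (hxK : ∀ i, 2 * xs i + 2 < K) (hyK : ∀ j, 2 * ys j + 2 < K) {P : Finset (RV n)}
    (hP : Feasible xs ys K P) : ∃ i j, xs i = ys j := by
  obtain ⟨hweight, hdist⟩ := hP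
  have far := fun {a b} ha hb hab =>
    exists_X_Y_of_le_rvDist hK hxs hyK hab (hdist a ha b hb hab)
  have hcard : 1 < P.card := by
    by_contra! h
    exact (sum_rvWeight_lt_of_card_le_one hK hys hxK h).not_ge hweight
  obtain ⟨a, ha, b, hb, hab⟩ := Finset.one_lt_card.1 hcard
  obtain ⟨i, j, hab', hle⟩ := far ha hb hab
  have hXY : .X i ∈ P ∧ .Y j ∈ P := by
    rcases hab' with ⟨rfl, rfl⟩ | ⟨rfl, rfl⟩
    exacts [⟨ha, hb⟩, ⟨hb, ha⟩]
  have hsub : P ⊆ {.X i, .Y j} := by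
    intro c hc
    by_contra! hc'
    simp only [Finset.mem_insert, Finset.mem_singleton, not_or] at hc'
    obtain ⟨_, _, hX, -⟩ := far hc hXY.1 hc'.1
    obtain ⟨_, _, hY, -⟩ := far hc hXY.2 hc'.2
    rcases hX with ⟨-, hX⟩ | ⟨rfl, -⟩
    · simp at hX
    · rcases hY with ⟨hY, -⟩ | ⟨-, hY⟩ <;> simp at hY
  refine ⟨i, j, hle.antisymm ?_⟩
  have := calc
    K ≤ ∑ a ∈ P, rvWeight xs ys K a := hweight
    _ ≤ ∑ a ∈ {.X i, .Y j}, rvWeight xs ys K a :=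
      Finset.sum_le_sum_of_subset_of_nonneg hsub fun a _ _ => rvWeight_nonneg hxs hys hyK a
    _ = K + xs i - ys j := sum_rvWeight_X_Y i j
  linarith

end

theorem stmt_6_general (n : ℕ) (hn : 0 < n) (xs ys : Fin n → ℝ)
    (hxs : ∀ i, 0 ≤ xs i) (hys : ∀ j, 0 ≤ ys j)
    (M : ℝ) (hM : ∀ i, xs i ≤ M ∧ ys i ≤ M)
    (K : ℝ) (hK : K = 2 * M + 3) :
    (∃ i j, xs i = ys j) ↔
      ∃ P : Finset (RV n),
        K ≤ (∑ a ∈ P, rvWeight xs ys K a) ∧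
        ∀ a ∈ P, ∀ b ∈ P, a ≠ b → K ≤ rvDist xs ys K a b := by
  have hM0 : 0 ≤ M := (hxs ⟨0, hn⟩).trans (hM ⟨0, hn⟩).1
  have hxK : ∀ i, 2 * xs i + 2 < K := fun i => by linarith [(hM i).1]
  have hyK : ∀ j, 2 * ys j + 2 < K := fun j => by linarith [(hM j).2]
  exact ⟨fun ⟨i, j, h⟩ => ⟨_, feasible_X_Y h⟩,
    fun ⟨_, hP⟩ => exists_eq_of_feasible (by linarith) hxs hys hxK hyK hP⟩

/-- Set disjointness reduction: `X ∩ Y ≠ ∅` iff there is a set `P` of vertices of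
total weight at least `K` with pairwise distances at least `K`, where
`K = 2·max(X ∪ Y) + 3`. -/
theorem stmt_6 (n : ℕ) (hn : 0 < n) (xs ys : Fin n → ℝ)
    (hxs : ∀ i, 0 ≤ xs i) (hys : ∀ j, 0 ≤ ys j)
    (M : ℝ) (hM : ∀ i, xs i ≤ M ∧ ys i ≤ M)
    (hMmem : ∃ i, xs i = M ∨ ys i = M)
    (K : ℝ) (hK : K = 2 * M + 3) :
    (∃ i j, xs i = ys j) ↔
      ∃ P : Finset (RV n),
        K ≤ (∑ a ∈ P, rvWeight xs ys K a) ∧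
        ∀ a ∈ P, ∀ b ∈ P, a ≠ b → K ≤ rvDist xs ys K a b :=
  stmt_6_general n hn xs ys hxs hys M hM K hK
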